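/- arXiv:1911.07890 — 5 statements merged into one kernel-verified Lean document; each statement's English description precedes it below -/
import Mathlib

section
/- Let r_0 > 0, let φ : [r_0, ∞) → [0, ∞) be measurable, and suppose there is a constant c ≥ 0 such that ∫_{r_0}^{x} 1_E(t) φ(t) dt ≤ c · q(x) · x for all x ≥ r_0, where E ⊆ [0, ∞) is measurable, 1_E is its indicator, and q : (0, ∞) → [0, ∞) is increasing with q(t) ≤ t. Then for all r_0 ≤ r < R < ∞, ∫_r^R 1_E(x) φ(x)/x² dx ≤ c + 2c ∫_r^R q(x)/x² dx. -/
/-!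
Integrating by parts against the primitive `F x = ∫_r^x 1_E φ`, which is absolutely continuous,
gives `∫_r^R 1_E φ / x² = F R / R² + 2 ∫_r^R F x / x³`. As `φ ≥ 0` on `[r₀, r]`,
`F x ≤ ∫_{r₀}^x 1_E φ ≤ c q(x) x`, so `q R ≤ R` bounds the boundary term by `c` and the
remaining integral by `2c ∫_r^R q(x) / x²`.
-/

open Set MeasureTheory intervalIntegral

theorem integral_mul_eq_sub_integral_primitive_mul_deriv {f g : ℝ → ℝ} {a b : ℝ}
    (hf : IntervalIntegrable f volume a b) (hg : AbsolutelyContinuousOnInterval g a b) :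
    ∫ x in a..b, f x * g x =
      (∫ x in a..b, f x) * g b - ∫ x in a..b, (∫ t in a..x, f t) * deriv g x := by
  have hF := hf.absolutelyContinuousOnInterval_intervalIntegral (c := a) left_mem_uIcc
  have hF' : ∫ x in a..b, deriv (fun x => ∫ t in a..x, f t) x * g x =
      ∫ x in a..b, f x * g x := by
    refine integral_congr_ae ?_
    filter_upwards [hf.ae_hasDerivAt_integral] with x hx hxab
    rw [(hx (uIoc_subset_uIcc hxab) a left_mem_uIcc).deriv]
  rw [hF.integral_mul_deriv_eq_deriv_mul hg, hF', integral_same, zero_mul, sub_zero]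
  ring

theorem hasDerivAt_inv_sq {x : ℝ} (hx : x ≠ 0) :
    HasDerivAt (fun x : ℝ => (x ^ 2)⁻¹) (-2 / x ^ 3) x :=
  ((hasDerivAt_pow 2 x).fun_inv (pow_ne_zero 2 hx)).congr_deriv (by field_simp; ring)

theorem integral_div_sq_eq {f : ℝ → ℝ} {a b : ℝ} (h0 : (0 : ℝ) ∉ uIcc a b)
    (hf : IntervalIntegrable f volume a b) :
    ∫ x in a..b, f x / x ^ 2 =
      (∫ x in a..b, f x) / b ^ 2 + 2 * ∫ x in a..b, (∫ t in a..x, f t) / x ^ 3 := by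
  have hne : ∀ x ∈ uIcc a b, x ≠ 0 := fun x hx h => h0 (h ▸ hx)
  have hg : AbsolutelyContinuousOnInterval (fun x : ℝ => (x ^ 2)⁻¹) a b :=
    ContDiffOn.absolutelyContinuousOnInterval <|
      (contDiffOn_id.pow 2).inv fun x hx => pow_ne_zero 2 (hne x hx)
  have hderiv : ∫ x in a..b, (∫ t in a..x, f t) * deriv (fun x : ℝ => (x ^ 2)⁻¹) x =
      -2 * ∫ x in a..b, (∫ t in a..x, f t) / x ^ 3 := by
    rw [← intervalIntegral.integral_const_mul]
    refine integral_congr fun x hx => ?_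
    simp only [(hasDerivAt_inv_sq (hne x hx)).deriv]
    ring
  simp_rw [div_eq_mul_inv (f _)]
  rw [integral_mul_eq_sub_integral_primitive_mul_deriv hf hg, hderiv]
  ring

theorem integral_le_integral_of_nonneg_of_le_left {f : ℝ → ℝ} {a b x : ℝ} (hab : a ≤ b)
    (hf : ∀ t ∈ Icc a b, 0 ≤ f t) (hfab : IntervalIntegrable f volume a b)
    (hfbx : IntervalIntegrable f volume b x) :
    ∫ t in b..x, f t ≤ ∫ t in a..x, f t := by
  rw [← integral_add_adjacent_intervals hfab hfbx, le_add_iff_nonneg_left]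
  exact integral_nonneg hab hf

theorem stmt3_general (r₀ : ℝ) (hr₀ : 0 < r₀) (φ : ℝ → ℝ) (hφpos : ∀ t, r₀ ≤ t → 0 ≤ φ t)
    (E : Set ℝ) (q : ℝ → ℝ) (hqle : ∀ t, 0 < t → q t ≤ t) (c : ℝ) (hc : 0 ≤ c)
    (hInt : ∀ x : ℝ, IntervalIntegrable (E.indicator φ) volume r₀ x)
    (hqInt : ∀ r R : ℝ, r₀ ≤ r → r < R →
      IntervalIntegrable (fun x => q x / x ^ 2) volume r R)
    (hbound : ∀ x : ℝ, r₀ ≤ x → (∫ t in r₀..x, E.indicator φ t) ≤ c * q x * x) :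
    ∀ r R : ℝ, r₀ ≤ r → r < R →
      (∫ x in r..R, E.indicator φ x / x ^ 2) ≤
        c + 2 * c * ∫ x in r..R, q x / x ^ 2 := by
  intro r R hr hrR
  set f := E.indicator φ
  have hr0 : 0 < r := hr₀.trans_le hr
  have hR0 : 0 < R := hr0.trans hrR
  have hfint (x : ℝ) : IntervalIntegrable f volume r x := (hInt r).symm.trans (hInt x)
  have hprim (x : ℝ) (hx : r ≤ x) : ∫ t in r..x, f t ≤ c * q x * x :=
    (integral_le_integral_of_nonneg_of_le_left hr
      (fun t ht => indicator_apply_nonneg fun _ => hφpos t ht.1) (hInt r) (hfint x)).trans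
      (hbound x (hr.trans hx))
  have hend : (∫ t in r..R, f t) / R ^ 2 ≤ c := by
    rw [div_le_iff₀ (by positivity)]
    calc ∫ t in r..R, f t ≤ c * q R * R := hprim R hrR.le
      _ ≤ c * R * R := by gcongr; exact hqle R hR0
      _ = c * R ^ 2 := by ring
  have hcont : ContinuousOn (fun x => (∫ t in r..x, f t) / x ^ 3) (uIcc r R) :=
    (continuousOn_primitive_interval' (hfint R) left_mem_uIcc).div (by fun_prop) fun x hx =>
      pow_ne_zero 3 (hr0.trans_le (uIcc_of_le hrR.le ▸ hx).1).ne'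
  have hbulk : ∫ x in r..R, (∫ t in r..x, f t) / x ^ 3 ≤ c * ∫ x in r..R, q x / x ^ 2 := by
    rw [← intervalIntegral.integral_const_mul]
    refine integral_mono_on hrR.le hcont.intervalIntegrable ((hqInt r R hr hrR).const_mul c)
      fun x hx => ?_
    have hx0 : 0 < x := hr0.trans_le hx.1
    calc (∫ t in r..x, f t) / x ^ 3 ≤ c * q x * x / x ^ 3 := by gcongr; exact hprim x hx.1
      _ = c * (q x / x ^ 2) := by field_simp
  have h0 : (0 : ℝ) ∉ uIcc r R := fun h => (uIcc_of_le hrR.le ▸ h).1.not_gt hr0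
  rw [integral_div_sq_eq h0 (hfint R)]
  linarith

/-- If `∫_{r₀}^x 1_E φ ≤ c q(x) x` for all `x ≥ r₀`, where `q` is increasing with
`q(t) ≤ t`, then `∫_r^R 1_E(x) φ(x)/x² dx ≤ c + 2c ∫_r^R q(x)/x² dx` for
`r₀ ≤ r < R`. -/
theorem stmt3 (r₀ : ℝ) (hr₀ : 0 < r₀) (φ : ℝ → ℝ) (hφmeas : Measurable φ)
    (hφpos : ∀ t, r₀ ≤ t → 0 ≤ φ t)
    (E : Set ℝ) (hE : MeasurableSet E) (hE0 : E ⊆ Set.Ici 0)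
    (q : ℝ → ℝ) (hqmono : MonotoneOn q (Set.Ioi 0))
    (hqpos : ∀ t, 0 < t → 0 ≤ q t) (hqle : ∀ t, 0 < t → q t ≤ t)
    (c : ℝ) (hc : 0 ≤ c)
    (hInt : ∀ x : ℝ, IntervalIntegrable (E.indicator φ) volume r₀ x)
    (hqInt : ∀ r R : ℝ, r₀ ≤ r → r < R →
      IntervalIntegrable (fun x => q x / x ^ 2) volume r R)
    (hbound : ∀ x : ℝ, r₀ ≤ x → (∫ t in r₀..x, E.indicator φ t) ≤ c * q x * x) :
    ∀ r R : ℝ, r₀ ≤ r → r < R →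
      (∫ x in r..R, E.indicator φ x / x ^ 2) ≤
        c + 2 * c * ∫ x in r..R, q x / x ^ 2 :=
  stmt3_general r₀ hr₀ φ hφpos E q hqle c hc hInt hqInt hbound
end

section
/- Let b > 0, let m : [0, ∞) → [0, ∞) be increasing with m(t) = 0 for t ∈ [0, b) and m(t) ≤ C·t for all t ≥ 0 (for some constant C ≥ 0). Let Q : [0, ∞) → [0, ∞) be continuous with Q(t) ≤ C₃·t for all t ≥ b (some constant C₃ ≥ 0). Then for every N ≥ 0 there exists C₂ ≥ 0 such that for all b ≤ r < R < ∞: ∫_r^R Q(t)/t² dm(t) ≤ C₂ · ∫_r^R t^N · sup_{s ≥ t} Q(s)/s^{2+N} dt + C₂. -/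
/-! Put `S(t) = sup_{s ≥ t} Q(s)/s^{2+N}`, so that `Q(t)/t² ≤ g(t) := t^N S(t)` and
`r^{N+1} S(r) ≤ C₃`. Since `S` decreases, `g` is comparable to its averages:
`g(t) ≤ 2^{N+1} t⁻¹ ∫_{[t/2, t)} g`. Integrating this against `dm` and swapping the integrals, each
`u` receives the weight `∫_{(u, 2u]} t⁻¹ dm(t) ≤ u⁻¹ m(2u) ≤ 2C`, whence
`∫_{(r,R]} g dm ≤ 2^{N+2} C ∫_{(r/2, R]} g`. The averages reach down to `r/2`; there `S` is
replaced by `S(r)`, and that piece contributes at most `r^{N+1} S(r) ≤ C₃`. -/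

open Real Set MeasureTheory intervalIntegral

open scoped ENNReal

def tailSup {α β : Type*} [Preorder α] [SupSet β] (f : α → β) (t : α) : β :=
  ⨆ s : {s : α // t ≤ s}, f s

section TailSup

variable {α β : Type*} [Preorder α] [ConditionallyCompleteLattice β] {f : α → β} {a t s : α}

theorem le_tailSup (hf : BddAbove (f '' Ici a)) (hat : a ≤ t) (hts : t ≤ s) :
    f s ≤ tailSup f t :=
  le_ciSup_of_le (hf.mono (by rintro _ ⟨u, rfl⟩; exact ⟨u, hat.trans u.2, rfl⟩)) ⟨s, hts⟩ le_rfl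

theorem tailSup_le {c : β} (h : ∀ s, t ≤ s → f s ≤ c) : tailSup f t ≤ c :=
  haveI : Nonempty {s : α // t ≤ s} := ⟨⟨t, le_rfl⟩⟩
  ciSup_le fun s => h s s.2

theorem tailSup_antitoneOn (hf : BddAbove (f '' Ici a)) : AntitoneOn (tailSup f) (Ici a) :=
  fun _ ht _ _ hts => tailSup_le fun _ hs => le_tailSup hf ht (hts.trans hs)

end TailSup

theorem lintegral_inv_mul_indicator_Ico_half_le {μ : Measure ℝ} {c : ℝ≥0∞}
    (hμ : ∀ u, 0 < u → μ (Ioc u (2 * u)) ≤ c * ENNReal.ofReal u) (g : ℝ → ℝ≥0∞) (u : ℝ) :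
    ∫⁻ t, (ENNReal.ofReal t)⁻¹ * (Ico (t / 2) t).indicator g u ∂μ ≤ c * g u := by
  have hle : ∀ t, (ENNReal.ofReal t)⁻¹ * (Ico (t / 2) t).indicator g u ≤
      (Ioc u (2 * u)).indicator (fun _ => (ENNReal.ofReal u)⁻¹ * g u) t := by
    intro t
    by_cases hu : u ∈ Ico (t / 2) t
    · have ht : t ∈ Ioc u (2 * u) := ⟨hu.2, by linarith [hu.1]⟩
      rw [indicator_of_mem hu, indicator_of_mem ht]
      gcongr
      exact hu.2.le
    · simp [indicator_of_notMem hu]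
  calc ∫⁻ t, (ENNReal.ofReal t)⁻¹ * (Ico (t / 2) t).indicator g u ∂μ
      ≤ (ENNReal.ofReal u)⁻¹ * g u * μ (Ioc u (2 * u)) := by
        rw [← setLIntegral_const, ← lintegral_indicator measurableSet_Ioc]
        exact lintegral_mono hle
    _ ≤ c * g u := by
        rcases le_or_gt u 0 with hu | hu
        · simp [Ioc_eq_empty (by linarith : ¬ u < 2 * u)]
        · calc (ENNReal.ofReal u)⁻¹ * g u * μ (Ioc u (2 * u))
              ≤ (ENNReal.ofReal u)⁻¹ * g u * (c * ENNReal.ofReal u) := by gcongr; exact hμ u hu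
            _ = c * g u * ((ENNReal.ofReal u)⁻¹ * ENNReal.ofReal u) := by ring
            _ = c * g u := by
              rw [ENNReal.inv_mul_cancel (by simpa using hu) ENNReal.ofReal_ne_top, mul_one]

theorem lintegral_inv_mul_setLIntegral_Ico_half_le {μ : Measure ℝ} [SFinite μ] {c : ℝ≥0∞}
    (hμ : ∀ u, 0 < u → μ (Ioc u (2 * u)) ≤ c * ENNReal.ofReal u) {g : ℝ → ℝ≥0∞}
    (hg : Measurable g) :
    ∫⁻ t, (ENNReal.ofReal t)⁻¹ * (∫⁻ u in Ico (t / 2) t, g u) ∂μ ≤ c * ∫⁻ u, g u := by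
  have hmeas : Measurable fun p : ℝ × ℝ =>
      (ENNReal.ofReal p.1)⁻¹ * (Ico (p.1 / 2) p.1).indicator g p.2 := by
    have hA : MeasurableSet {p : ℝ × ℝ | p.1 / 2 ≤ p.2 ∧ p.2 < p.1} :=
      (measurableSet_le (measurable_fst.div_const 2) measurable_snd).inter
        (measurableSet_lt measurable_snd measurable_fst)
    exact measurable_fst.ennreal_ofReal.inv.mul ((hg.comp measurable_snd).indicator hA)
  calc ∫⁻ t, (ENNReal.ofReal t)⁻¹ * (∫⁻ u in Ico (t / 2) t, g u) ∂μ
      = ∫⁻ t, (∫⁻ u, (ENNReal.ofReal t)⁻¹ * (Ico (t / 2) t).indicator g u) ∂μ := by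
        refine lintegral_congr fun t => ?_
        rw [← lintegral_indicator measurableSet_Ico,
          ← lintegral_const_mul _ (hg.indicator measurableSet_Ico)]
    _ = ∫⁻ u, ∫⁻ t, (ENNReal.ofReal t)⁻¹ * (Ico (t / 2) t).indicator g u ∂μ :=
        lintegral_lintegral_swap hmeas.aemeasurable
    _ ≤ ∫⁻ u, c * g u := lintegral_mono (lintegral_inv_mul_indicator_Ico_half_le hμ g)
    _ = c * ∫⁻ u, g u := lintegral_const_mul c hg

theorem ofReal_rpow_mul_le_setLIntegral_Ico_half {φ : ℝ → ℝ} {r t N : ℝ} (hN : 0 ≤ N)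
    (hφ : AntitoneOn φ (Ici r)) (hφt : 0 ≤ φ t) (ht : 0 < t) (hrt : r ≤ t) :
    ENNReal.ofReal (t ^ N * φ t) ≤ ENNReal.ofReal (2 ^ (N + 1)) *
      ((ENNReal.ofReal t)⁻¹ * ∫⁻ u in Ico (t / 2) t, ENNReal.ofReal (u ^ N * φ (max u r))) := by
  have hlow : ENNReal.ofReal ((t / 2) ^ N * φ t) * ENNReal.ofReal (t / 2)
      ≤ ∫⁻ u in Ico (t / 2) t, ENNReal.ofReal (u ^ N * φ (max u r)) := by
    rw [show t / 2 = t - t / 2 by ring, ← Real.volume_Ico, ← setLIntegral_const,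
      show t - t / 2 = t / 2 by ring]
    refine setLIntegral_mono' measurableSet_Ico fun u hu => ENNReal.ofReal_le_ofReal ?_
    exact mul_le_mul (rpow_le_rpow (by positivity) hu.1 hN)
      (hφ (le_max_right u r) hrt (max_le hu.2.le hrt)) hφt (rpow_nonneg (by linarith [hu.1]) N)
  have hsplit : t ^ N * φ t = 2 ^ (N + 1) * (t⁻¹ * ((t / 2) ^ N * φ t * (t / 2))) := by
    rw [div_rpow ht.le zero_le_two, rpow_add_one two_ne_zero]
    field_simp
  calc ENNReal.ofReal (t ^ N * φ t)
      = ENNReal.ofReal (2 ^ (N + 1)) * ((ENNReal.ofReal t)⁻¹ *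
          (ENNReal.ofReal ((t / 2) ^ N * φ t) * ENNReal.ofReal (t / 2))) := by
        rw [hsplit, ← ENNReal.ofReal_mul (by positivity), ← ENNReal.ofReal_inv_of_pos ht,
          ← ENNReal.ofReal_mul (by positivity), ← ENNReal.ofReal_mul (by positivity)]
    _ ≤ _ := by gcongr

theorem setLIntegral_Ioc_rpow_mul_le {μ : Measure ℝ} [SFinite μ] {c : ℝ≥0∞}
    (hμ : ∀ u, 0 < u → μ (Ioc u (2 * u)) ≤ c * ENNReal.ofReal u) {φ : ℝ → ℝ} {r R N : ℝ}
    (hr : 0 < r) (hrR : r ≤ R) (hN : 0 ≤ N) (hφ : AntitoneOn φ (Ici r))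
    (hφ0 : ∀ t, r ≤ t → 0 ≤ φ t) :
    ∫⁻ t in Ioc r R, ENNReal.ofReal (t ^ N * φ t) ∂μ ≤ ENNReal.ofReal (2 ^ (N + 1)) * c *
      (ENNReal.ofReal (r ^ (N + 1) * φ r) + ∫⁻ t in Ioc r R, ENNReal.ofReal (t ^ N * φ t)) := by
  set G : ℝ → ℝ≥0∞ := fun u => ENNReal.ofReal (u ^ N * φ (max u r))
  have hG : Measurable G := by
    have : Antitone fun u => φ (max u r) := fun u v huv =>
      hφ (le_max_right u r) (le_max_right v r) (max_le_max huv le_rfl)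
    exact ((measurable_id.pow_const N).mul this.measurable).ennreal_ofReal
  have hG_eq : ∀ u ∈ Ioc r R, G u = ENNReal.ofReal (u ^ N * φ u) := fun u hu => by
    simp only [G, max_eq_left hu.1.le]
  have hG_left : ∫⁻ u in Ioc (r / 2) r, G u ≤ ENNReal.ofReal (r ^ (N + 1) * φ r) := by
    calc ∫⁻ u in Ioc (r / 2) r, G u ≤ ∫⁻ _ in Ioc (r / 2) r, ENNReal.ofReal (r ^ N * φ r) := by
          refine setLIntegral_mono' measurableSet_Ioc fun u hu => ENNReal.ofReal_le_ofReal ?_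
          rw [max_eq_right hu.2]
          exact mul_le_mul_of_nonneg_right
            (rpow_le_rpow (by linarith [hu.1]) hu.2 hN) (hφ0 r le_rfl)
      _ ≤ ENNReal.ofReal (r ^ N * φ r) * ENNReal.ofReal r := by
          rw [setLIntegral_const, Real.volume_Ioc]
          gcongr
          linarith
      _ = ENNReal.ofReal (r ^ (N + 1) * φ r) := by
          rw [← ENNReal.ofReal_mul' hr.le, rpow_add_one hr.ne']
          ring_nf
  set g := (Ioc (r / 2) R).indicator G
  calc ∫⁻ t in Ioc r R, ENNReal.ofReal (t ^ N * φ t) ∂μ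
      ≤ ∫⁻ t in Ioc r R, ENNReal.ofReal (2 ^ (N + 1)) *
          ((ENNReal.ofReal t)⁻¹ * ∫⁻ u in Ico (t / 2) t, g u) ∂μ := by
        refine setLIntegral_mono' measurableSet_Ioc fun t ht => ?_
        have hsub : Ico (t / 2) t ⊆ Ioc (r / 2) R :=
          fun u hu => ⟨by linarith [hu.1, ht.1], hu.2.le.trans ht.2⟩
        rw [setLIntegral_indicator measurableSet_Ioc, inter_eq_right.2 hsub]
        exact ofReal_rpow_mul_le_setLIntegral_Ico_half hN hφ (hφ0 t ht.1.le) (hr.trans ht.1)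
          ht.1.le
    _ ≤ ENNReal.ofReal (2 ^ (N + 1)) *
          ∫⁻ t, (ENNReal.ofReal t)⁻¹ * (∫⁻ u in Ico (t / 2) t, g u) ∂μ := by
        rw [lintegral_const_mul' _ _ ENNReal.ofReal_ne_top]
        gcongr
        exact Measure.restrict_le_self
    _ ≤ ENNReal.ofReal (2 ^ (N + 1)) * (c * ∫⁻ u, g u) := by
        gcongr
        exact lintegral_inv_mul_setLIntegral_Ico_half_le hμ (hG.indicator measurableSet_Ioc)
    _ = ENNReal.ofReal (2 ^ (N + 1)) * c *
          ((∫⁻ u in Ioc (r / 2) r, G u) + ∫⁻ t in Ioc r R, ENNReal.ofReal (t ^ N * φ t)) := by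
        rw [lintegral_indicator measurableSet_Ioc, ← Ioc_union_Ioc_eq_Ioc (by linarith) hrR,
          lintegral_union measurableSet_Ioc (Ioc_disjoint_Ioc_of_le le_rfl),
          setLIntegral_congr_fun measurableSet_Ioc hG_eq, mul_assoc]
    _ ≤ _ := by gcongr

theorem StieltjesFunction.measure_Ioc_two_mul_le (m : StieltjesFunction ℝ) {C : ℝ}
    (hm : ∀ t, 0 ≤ m t) (hmC : ∀ t, 0 ≤ t → m t ≤ C * t) {u : ℝ} (hu : 0 < u) :
    m.measure (Ioc u (2 * u)) ≤ ENNReal.ofReal (2 * C) * ENNReal.ofReal u := by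
  rw [m.measure_Ioc, ← ENNReal.ofReal_mul' hu.le]
  exact ENNReal.ofReal_le_ofReal (by linarith [hm u, hmC (2 * u) (by linarith)])

theorem StieltjesFunction.setIntegral_Ioc_le_of_le_rpow_mul (m : StieltjesFunction ℝ) {C : ℝ}
    (hC : 0 ≤ C) (hm : ∀ t, 0 ≤ m t) (hmC : ∀ t, 0 ≤ t → m t ≤ C * t) {φ : ℝ → ℝ} {r R N : ℝ}
    (hr : 0 < r) (hrR : r ≤ R) (hN : 0 ≤ N) (hφ : AntitoneOn φ (Ici r))
    (hφ0 : ∀ t, r ≤ t → 0 ≤ φ t) {f : ℝ → ℝ} (hf : Measurable f) (hf0 : ∀ t, 0 ≤ f t)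
    (hfφ : ∀ t ∈ Ioc r R, f t ≤ t ^ N * φ t) :
    ∫ t in Ioc r R, f t ∂m.measure ≤
      2 ^ (N + 2) * C * (r ^ (N + 1) * φ r + ∫ t in r..R, t ^ N * φ t) := by
  have hφI : IntervalIntegrable φ volume r R :=
    (hφ.mono (by rw [uIcc_of_le hrR]; exact Icc_subset_Ici_self)).intervalIntegrable
  have hI : ∫⁻ t in Ioc r R, ENNReal.ofReal (t ^ N * φ t) =
      ENNReal.ofReal (∫ t in r..R, t ^ N * φ t) := by
    rw [integral_of_le hrR, ofReal_integral_eq_lintegral_ofReal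
      (hφI.continuousOn_mul (continuous_rpow_const hN).continuousOn).1]
    exact (ae_restrict_iff' measurableSet_Ioc).2 (Filter.Eventually.of_forall fun t ht =>
      mul_nonneg (rpow_nonneg (hr.trans ht.1).le N) (hφ0 t ht.1.le))
  have hI0 : 0 ≤ ∫ t in r..R, t ^ N * φ t := integral_nonneg hrR fun t ht =>
    mul_nonneg (rpow_nonneg (hr.trans_le ht.1).le N) (hφ0 t ht.1)
  have hφr := hφ0 r le_rfl
  rw [integral_eq_lintegral_of_nonneg_ae (Filter.Eventually.of_forall hf0) hf.aestronglyMeasurable]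
  refine ENNReal.toReal_le_of_le_ofReal (by positivity) ?_
  calc ∫⁻ t in Ioc r R, ENNReal.ofReal (f t) ∂m.measure
      ≤ ∫⁻ t in Ioc r R, ENNReal.ofReal (t ^ N * φ t) ∂m.measure :=
        setLIntegral_mono' measurableSet_Ioc fun t ht => ENNReal.ofReal_le_ofReal (hfφ t ht)
    _ ≤ ENNReal.ofReal (2 ^ (N + 1)) * ENNReal.ofReal (2 * C) *
          (ENNReal.ofReal (r ^ (N + 1) * φ r) + ∫⁻ t in Ioc r R, ENNReal.ofReal (t ^ N * φ t)) :=
        setLIntegral_Ioc_rpow_mul_le (fun _ hu => m.measure_Ioc_two_mul_le hm hmC hu) hr hrR hN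
          hφ hφ0
    _ = ENNReal.ofReal (2 ^ (N + 2) * C * (r ^ (N + 1) * φ r + ∫ t in r..R, t ^ N * φ t)) := by
        rw [hI, ← ENNReal.ofReal_add (by positivity) hI0, ← ENNReal.ofReal_mul (by positivity),
          ← ENNReal.ofReal_mul (by positivity), show N + 2 = N + 1 + 1 by ring,
          rpow_add_one two_ne_zero (N + 1)]
        ring_nf

theorem div_rpow_two_add_le {q c N s t : ℝ} (ht : 0 < t) (hts : t ≤ s) (hN : -1 ≤ N)
    (hc : 0 ≤ c) (hq : q ≤ c * s) : q / s ^ ((2 : ℝ) + N) ≤ c / t ^ (N + 1) := by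
  have hs : 0 < s := ht.trans_le hts
  calc q / s ^ ((2 : ℝ) + N) = q / (s ^ (N + 1) * s) := by
        rw [show (2 : ℝ) + N = N + 1 + 1 by ring, rpow_add_one hs.ne']
    _ ≤ c * s / (s ^ (N + 1) * s) := by gcongr
    _ = c / s ^ (N + 1) := by field_simp
    _ ≤ c / t ^ (N + 1) := by gcongr; linarith

theorem div_sq_eq_rpow_mul_div_rpow_two_add {q t : ℝ} (N : ℝ) (ht : 0 < t) :
    q / t ^ 2 = t ^ N * (q / t ^ ((2 : ℝ) + N)) := by
  rw [rpow_add ht, rpow_two]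
  field_simp

theorem stmt4_general (b : ℝ) (hb : 0 < b) (m : StieltjesFunction ℝ)
    (hmpos : ∀ t : ℝ, 0 ≤ m t)
    (C : ℝ) (hC : 0 ≤ C) (hmC : ∀ t : ℝ, 0 ≤ t → m t ≤ C * t)
    (Q : ℝ → ℝ) (hQcont : Continuous Q) (hQpos : ∀ t : ℝ, 0 ≤ Q t)
    (C₃ : ℝ) (hC₃ : 0 ≤ C₃) (hQC₃ : ∀ t : ℝ, b ≤ t → Q t ≤ C₃ * t)
    (N : ℝ) (hN : 0 ≤ N) :
    ∃ C₂ : ℝ, 0 ≤ C₂ ∧ ∀ r R : ℝ, b ≤ r → r < R →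
      (∫ t in Set.Ioc r R, Q t / t ^ 2 ∂m.measure) ≤
        C₂ * (∫ t in r..R, t ^ N * ⨆ s : {s : ℝ // t ≤ s}, Q s.1 / (s.1 : ℝ) ^ ((2:ℝ) + N))
          + C₂ := by
  set f : ℝ → ℝ := fun s => Q s / s ^ ((2 : ℝ) + N)
  have hdecay : ∀ t s, b ≤ t → t ≤ s → f s ≤ C₃ / t ^ (N + 1) := fun t s hbt hts =>
    div_rpow_two_add_le (hb.trans_le hbt) hts (by linarith) hC₃ (hQC₃ s (hbt.trans hts))
  have hbdd : BddAbove (f '' Ici b) :=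
    ⟨C₃ / b ^ (N + 1), by rintro _ ⟨s, hs, rfl⟩; exact hdecay b s le_rfl hs⟩
  refine ⟨2 ^ (N + 2) * C * (C₃ + 1), by positivity, fun r R hbr hrR => ?_⟩
  have hr : 0 < r := hb.trans_le hbr
  have hS0 : ∀ t, r ≤ t → 0 ≤ tailSup f t := fun t ht =>
    (div_nonneg (hQpos t) (rpow_nonneg (hr.trans_le ht).le _)).trans
      (le_tailSup hbdd (hbr.trans ht) le_rfl)
  have hSr : r ^ (N + 1) * tailSup f r ≤ C₃ := by
    rw [mul_comm, ← le_div_iff₀ (by positivity)]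
    exact tailSup_le fun s hs => hdecay r s hbr hs
  have hQS : ∀ t ∈ Ioc r R, Q t / t ^ 2 ≤ t ^ N * tailSup f t := fun t ht => by
    rw [div_sq_eq_rpow_mul_div_rpow_two_add N (hr.trans ht.1)]
    exact mul_le_mul_of_nonneg_left (le_tailSup hbdd (hbr.trans ht.1.le) le_rfl)
      (rpow_nonneg (hr.trans ht.1).le N)
  have hI0 : 0 ≤ ∫ t in r..R, t ^ N * tailSup f t := integral_nonneg hrR.le fun t ht =>
    mul_nonneg (rpow_nonneg (hr.trans_le ht.1).le N) (hS0 t ht.1)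
  calc ∫ t in Ioc r R, Q t / t ^ 2 ∂m.measure
      ≤ 2 ^ (N + 2) * C * (r ^ (N + 1) * tailSup f r + ∫ t in r..R, t ^ N * tailSup f t) :=
        m.setIntegral_Ioc_le_of_le_rpow_mul hC hmpos hmC hr hrR.le hN
          ((tailSup_antitoneOn hbdd).mono (Ici_subset_Ici.2 hbr)) hS0
          (hQcont.measurable.div (measurable_id.pow_const 2))
          (fun t => div_nonneg (hQpos t) (sq_nonneg t)) hQS
    _ ≤ 2 ^ (N + 2) * C * (C₃ + 1) * (∫ t in r..R, t ^ N * tailSup f t) +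
          2 ^ (N + 2) * C * (C₃ + 1) := by
        have hK : 0 ≤ 2 ^ (N + 2) * C := by positivity
        nlinarith [mul_nonneg hK (mul_nonneg hC₃ hI0), mul_le_mul_of_nonneg_left hSr hK]

/-- Lemma 3 of the paper: if the increasing function `m` vanishes on `[0, b)` and
satisfies `m(t) ≤ C t`, and the continuous `Q ≥ 0` satisfies `Q(t) ≤ C₃ t` for
`t ≥ b`, then for every `N ≥ 0` there is `C₂ ≥ 0` with
`∫_{(r,R]} Q(t)/t² dm(t) ≤ C₂ ∫_r^R t^N sup_{s ≥ t} Q(s)/s^{2+N} dt + C₂`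
for all `b ≤ r < R`. -/
theorem stmt4 (b : ℝ) (hb : 0 < b) (m : StieltjesFunction ℝ)
    (hm0 : ∀ t : ℝ, t < b → m t = 0) (hmpos : ∀ t : ℝ, 0 ≤ m t)
    (C : ℝ) (hC : 0 ≤ C) (hmC : ∀ t : ℝ, 0 ≤ t → m t ≤ C * t)
    (Q : ℝ → ℝ) (hQcont : Continuous Q) (hQpos : ∀ t : ℝ, 0 ≤ Q t)
    (C₃ : ℝ) (hC₃ : 0 ≤ C₃) (hQC₃ : ∀ t : ℝ, b ≤ t → Q t ≤ C₃ * t)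
    (N : ℝ) (hN : 0 ≤ N) :
    ∃ C₂ : ℝ, 0 ≤ C₂ ∧ ∀ r R : ℝ, b ≤ r → r < R →
      (∫ t in Set.Ioc r R, Q t / t ^ 2 ∂m.measure) ≤
        C₂ * (∫ t in r..R, t ^ N * ⨆ s : {s : ℝ // t ≤ s}, Q s.1 / (s.1 : ℝ) ^ ((2:ℝ) + N))
          + C₂ :=
  stmt4_general b hb m hmpos C hC hmC Q hQcont hQpos C₃ hC₃ hQC₃ N hN
end

section
/- Let μ be a positive Borel measure on ℂ of finite upper density, let r_0 > 0, and fix a ∈ (0, 1], b ∈ [1, ∞). Then for the right logarithmic measure l⁺_μ(r, R) := ∫_{r < |z| ≤ R, Re z > 0} Re(1/z) dμ(z), the difference |l⁺_μ(r, R) − l⁺_μ(a·r, b·R)| is bounded uniformly over all r_0 ≤ r < R < ∞. -/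
open Real Set Filter MeasureTheory Complex

/-!
On the half-annulus `r < |z| ≤ R, Re z > 0` one has `|Re (1/z)| ≤ 1/r`, and finite upper
density gives `μ(D(0,t)) ≤ M t` for all `t ≥ r₀`. Since `ar ≤ r < R ≤ bR`, the difference of
the two logarithmic measures is the sum of the integrals over `ar < |z| ≤ r` and
`R < |z| ≤ bR`, which are bounded by `M r / (ar) = M / a` and `M bR / R = M b`.
-/

section LinearGrowth

variable {X : Type*} [PseudoMetricSpace X] [MeasurableSpace X] {μ : Measure X} {x : X}

theorem exists_eventually_measureReal_ball_le_mul
    (hden : limsup (fun r : ℝ => (((μ (Metric.ball x r)).toReal / r : ℝ) : EReal)) atTop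
      < ⊤) :
    ∃ c : ℝ, ∀ᶠ t in atTop, μ.real (Metric.ball x t) ≤ c * t := by
  obtain ⟨c, hc, -⟩ := EReal.exists_between_coe_real hden
  refine ⟨c, ((eventually_lt_of_limsup_lt hc).and (eventually_gt_atTop 0)).mono ?_⟩
  rintro t ⟨ht, ht0⟩
  exact ((div_lt_iff₀ ht0).mp (EReal.coe_lt_coe_iff.mp ht)).le

theorem exists_forall_ge_measureReal_closedBall_le_mul
    (hfin : ∀ r : ℝ, μ (Metric.ball x r) ≠ ⊤) {c : ℝ}
    (hc : ∀ᶠ t in atTop, μ.real (Metric.ball x t) ≤ c * t) {r₀ : ℝ} (hr₀ : 0 < r₀) :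
    ∃ M : ℝ, ∀ t, r₀ ≤ t → μ.real (Metric.closedBall x t) ≤ M * t := by
  obtain ⟨t₀, ht₀⟩ := hc.exists_forall_of_atTop
  -- enlarging the closed ball of radius `t` by the factor `k` lands in the range `t ≥ t₀`
  set k : ℝ := 2 + |t₀| / r₀
  refine ⟨max c 0 * k, fun t ht => ?_⟩
  have ht0 : 0 < t := hr₀.trans_le ht
  have habs_le : |t₀| / r₀ * t ≥ |t₀| := by
    rw [div_mul_eq_mul_div, ge_iff_le, le_div_iff₀ hr₀]
    exact mul_le_mul_of_nonneg_left ht (abs_nonneg t₀)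
  have hlt : t < k * t := by nlinarith [abs_nonneg t₀]
  calc μ.real (Metric.closedBall x t) ≤ μ.real (Metric.ball x (k * t)) :=
        measureReal_mono (Metric.closedBall_subset_ball hlt) (hfin _)
    _ ≤ c * (k * t) := ht₀ _ (by nlinarith [le_abs_self t₀])
    _ ≤ max c 0 * (k * t) := by gcongr; exact le_max_left c 0
    _ = max c 0 * k * t := by ring

end LinearGrowth

def halfAnnulus (s t : ℝ) : Set ℂ := {z : ℂ | s < ‖z‖ ∧ ‖z‖ ≤ t ∧ 0 < z.re}

/-- The right logarithmic measure `l⁺_μ(s, t)`. -/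
noncomputable def rightLogMeasure (μ : Measure ℂ) (s t : ℝ) : ℝ :=
  ∫ z in halfAnnulus s t, ((1 : ℂ) / z).re ∂μ

theorem measurableSet_halfAnnulus (s t : ℝ) : MeasurableSet (halfAnnulus s t) :=
  (measurableSet_lt measurable_const measurable_norm).inter
    ((measurableSet_le measurable_norm measurable_const).inter
      (measurableSet_lt measurable_const measurable_re))

theorem halfAnnulus_subset_closedBall (s t : ℝ) : halfAnnulus s t ⊆ Metric.closedBall 0 t :=
  fun _ hz => mem_closedBall_zero_iff.mpr hz.2.1

theorem halfAnnulus_union {s t u : ℝ} (hst : s ≤ t) (htu : t ≤ u) :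
    halfAnnulus s t ∪ halfAnnulus t u = halfAnnulus s u := by
  ext z
  simp only [halfAnnulus, mem_union, mem_ofPred_eq]
  constructor
  · rintro (⟨hs, ht, hre⟩ | ⟨ht, hu, hre⟩)
    · exact ⟨hs, ht.trans htu, hre⟩
    · exact ⟨hst.trans_lt ht, hu, hre⟩
  · rintro ⟨hs, hu, hre⟩
    rcases le_or_gt ‖z‖ t with ht | ht
    · exact Or.inl ⟨hs, ht, hre⟩
    · exact Or.inr ⟨ht, hu, hre⟩

theorem disjoint_halfAnnulus (s t u : ℝ) : Disjoint (halfAnnulus s t) (halfAnnulus t u) :=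
  disjoint_left.mpr fun _ h₁ h₂ => h₂.1.not_ge h₁.2.1

theorem norm_re_one_div_le_of_mem_halfAnnulus {s t : ℝ} (hs : 0 < s) {z : ℂ}
    (hz : z ∈ halfAnnulus s t) : ‖((1 : ℂ) / z).re‖ ≤ 1 / s :=
  calc ‖((1 : ℂ) / z).re‖ ≤ ‖(1 : ℂ) / z‖ := abs_re_le_norm _
    _ = 1 / ‖z‖ := by rw [norm_div, norm_one]
    _ ≤ 1 / s := one_div_le_one_div_of_le hs hz.1.le

section RightLogMeasure

variable {μ : Measure ℂ} (hfin : ∀ r : ℝ, μ (Metric.ball 0 r) ≠ ⊤)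
include hfin

theorem measure_closedBall_zero_ne_top (t : ℝ) : μ (Metric.closedBall 0 t) ≠ ⊤ :=
  ne_top_of_le_ne_top (hfin (t + 1)) (measure_mono (Metric.closedBall_subset_ball (by linarith)))

theorem measure_halfAnnulus_lt_top (s t : ℝ) : μ (halfAnnulus s t) < ⊤ :=
  (measure_mono (halfAnnulus_subset_closedBall s t)).trans_lt
    (measure_closedBall_zero_ne_top hfin t).lt_top

theorem integrableOn_halfAnnulus {s : ℝ} (hs : 0 < s) (t : ℝ) :
    IntegrableOn (fun z : ℂ => ((1 : ℂ) / z).re) (halfAnnulus s t) μ :=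
  IntegrableOn.of_bound (measure_halfAnnulus_lt_top hfin s t)
    (measurable_re.comp (measurable_const.div measurable_id)).aestronglyMeasurable (1 / s)
    ((ae_restrict_iff' (measurableSet_halfAnnulus s t)).mpr
      (ae_of_all _ fun _ => norm_re_one_div_le_of_mem_halfAnnulus hs))

theorem rightLogMeasure_add {s t u : ℝ} (hs : 0 < s) (hst : s ≤ t) (htu : t ≤ u) :
    rightLogMeasure μ s t + rightLogMeasure μ t u = rightLogMeasure μ s u := by
  rw [rightLogMeasure, rightLogMeasure, rightLogMeasure, ← halfAnnulus_union hst htu,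
    setIntegral_union (disjoint_halfAnnulus s t u) (measurableSet_halfAnnulus t u)
      (integrableOn_halfAnnulus hfin hs t) (integrableOn_halfAnnulus hfin (hs.trans_le hst) u)]

theorem abs_rightLogMeasure_le {s : ℝ} (hs : 0 < s) (t : ℝ) :
    |rightLogMeasure μ s t| ≤ μ.real (Metric.closedBall 0 t) / s :=
  calc |rightLogMeasure μ s t| ≤ 1 / s * μ.real (halfAnnulus s t) :=
        norm_setIntegral_le_of_norm_le_const (measure_halfAnnulus_lt_top hfin s t)
          fun _ => norm_re_one_div_le_of_mem_halfAnnulus hs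
    _ ≤ 1 / s * μ.real (Metric.closedBall 0 t) := by
        gcongr
        exacts [measure_closedBall_zero_ne_top hfin t, halfAnnulus_subset_closedBall s t]
    _ = μ.real (Metric.closedBall 0 t) / s := one_div_mul_eq_div _ _

end RightLogMeasure

/-- For a positive Borel measure `μ` on `ℂ` of finite upper density, `r₀ > 0`,
`a ∈ (0,1]`, `b ∈ [1,∞)`, the difference `|l⁺_μ(r,R) − l⁺_μ(a r, b R)|` is
uniformly bounded over `r₀ ≤ r < R < ∞`. -/
theorem stmt11 (μ : Measure ℂ)
    (hfin : ∀ r : ℝ, μ (Metric.ball (0:ℂ) r) ≠ ⊤)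
    (hden : Filter.limsup
        (fun r : ℝ => (((μ (Metric.ball (0:ℂ) r)).toReal / r : ℝ) : EReal))
        Filter.atTop < ⊤)
    (r₀ : ℝ) (hr₀ : 0 < r₀) (a b : ℝ) (ha : a ∈ Set.Ioc (0:ℝ) 1)
    (hb : b ∈ Set.Ici (1:ℝ)) :
    ∃ C : ℝ, ∀ r R : ℝ, r₀ ≤ r → r < R →
      |(∫ z in {z : ℂ | r < ‖z‖ ∧ ‖z‖ ≤ R ∧ 0 < z.re},
          ((1 : ℂ) / z).re ∂μ)
        - ∫ z in {z : ℂ | a * r < ‖z‖ ∧ ‖z‖ ≤ b * R ∧ 0 < z.re},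
            ((1 : ℂ) / z).re ∂μ| ≤ C := by
  obtain ⟨ha0, ha1⟩ := ha
  obtain ⟨c, hc⟩ := exists_eventually_measureReal_ball_le_mul hden
  obtain ⟨M, hM⟩ := exists_forall_ge_measureReal_closedBall_le_mul hfin hc hr₀
  refine ⟨M / a + M * b, fun r R hr hrR => ?_⟩
  change |rightLogMeasure μ r R - rightLogMeasure μ (a * r) (b * R)| ≤ _
  have hr0 : 0 < r := hr₀.trans_le hr
  have hR0 : 0 < R := hr0.trans hrR
  have har : a * r ≤ r := mul_le_of_le_one_left hr0.le ha1
  have hbR : R ≤ b * R := le_mul_of_one_le_left hR0.le hb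
  have hinner : |rightLogMeasure μ (a * r) r| ≤ M / a :=
    calc _ ≤ μ.real (Metric.closedBall 0 r) / (a * r) :=
          abs_rightLogMeasure_le hfin (by positivity) r
      _ ≤ M * r / (a * r) := by gcongr; exact hM r hr
      _ = M / a := by field_simp
  have houter : |rightLogMeasure μ R (b * R)| ≤ M * b :=
    calc _ ≤ μ.real (Metric.closedBall 0 (b * R)) / R := abs_rightLogMeasure_le hfin hR0 _
      _ ≤ M * (b * R) / R := by gcongr; exact hM _ (by linarith)
      _ = M * b := by field_simp
  rw [← rightLogMeasure_add hfin (by positivity) har (hrR.le.trans hbR),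
    ← rightLogMeasure_add hfin hr0 hrR.le hbR]
  calc _ = |rightLogMeasure μ (a * r) r + rightLogMeasure μ R (b * R)| := by
        rw [← abs_neg]; ring_nf
    _ ≤ M / a + M * b := (abs_add_le _ _).trans (add_le_add hinner houter)
end

section
/- Let μ be a positive Borel measure on ℂ supported in the closure of the domain D = {z ∈ ℂ : −q(Im z) < Re z < q(Im z)}, where q : ℝ → [1, ∞) is continuous with limsup_{|y|→∞} q(y)/|y| < 1. Assume additionally that supp μ is disjoint from the strip {|Im z| < b} for some b > 0, that supp μ lies in the union of the two vertical angles {α < arg z < π − α} ∪ {−π + α < arg z < −α} for some α ∈ (0, π/2), and that μ({|Im z| ≤ y}) ≤ C·y for all y ≥ 0. Then there exists C₀ ≥ 0 such that for all b ≤ r < R < ∞: ∫_{r < |z| ≤ R, Re z > 0} Re(1/z) dμ(z) ≤ ∫_r^R (q(y) + q(−y))/y² dm(y) + C₀, where m(y) := μ({z : |Im z| ≤ y}). -/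
open Real Set Filter MeasureTheory Complex


lemma aux_sin17 {α θ : ℝ} (hα0 : 0 < α) (hα2 : α < π/2) (h1 : α ≤ θ) (h2 : θ ≤ π - α) :
    Real.sin α ≤ Real.sin θ := by
  rcases le_or_gt θ (π/2) with h | h
  · exact Real.sin_le_sin_of_le_of_le_pi_div_two (by linarith) h h1
  · rw [← Real.sin_pi_sub θ]
    exact Real.sin_le_sin_of_le_of_le_pi_div_two (by linarith) (by linarith) (by linarith)

lemma aux_qlin17 (q : ℝ → ℝ) (hqcont : Continuous q) (hq1 : ∀ y : ℝ, 1 ≤ q y)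
    (hqlim : Filter.limsup (fun y : ℝ => ((q y / |y| : ℝ) : EReal))
        (Bornology.cobounded ℝ) < (1 : EReal)) :
    ∃ A : ℝ, 1 ≤ A ∧ ∀ y, q y ≤ A + |y| := by
  have hev : ∀ᶠ y in Bornology.cobounded ℝ, ((q y / |y| : ℝ) : EReal) < 1 :=
    Filter.eventually_lt_of_limsup_lt hqlim
  rw [Real.cobounded_eq, Filter.eventually_sup, Filter.eventually_atBot,
    Filter.eventually_atTop] at hev
  obtain ⟨⟨M₁, hM₁⟩, M₂, hM₂⟩ := hev
  set M : ℝ := max (max (-M₁) M₂) 1 with hM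
  have hM0 : (1:ℝ) ≤ M := le_max_right _ _
  have hlarge : ∀ y : ℝ, M ≤ |y| → q y ≤ |y| := by
    intro y hy
    have hy0 : (0:ℝ) < |y| := by linarith
    have hlt : ((q y / |y| : ℝ) : EReal) < 1 := by
      rcases le_or_gt 0 y with h | h
      · exact hM₂ y (by rw [abs_of_nonneg (α := ℝ) h] at hy; calc M₂ ≤ M := le_trans (le_max_right _ _) (le_max_left _ _)
          _ ≤ y := hy)
      · refine hM₁ y ?_
        rw [abs_of_neg (α := ℝ) h] at hy
        have : -M₁ ≤ M := le_trans (le_max_left _ _) (le_max_left _ _)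
        linarith
    have hlt' : q y / |y| < 1 := by exact_mod_cast hlt
    exact le_of_lt ((div_lt_one hy0).mp hlt')
  obtain ⟨y₀, _, hy₀⟩ := isCompact_Icc.exists_isMaxOn (s := Icc (-M) M)
    ⟨0, by constructor <;> linarith⟩ hqcont.continuousOn
  refine ⟨q y₀, hq1 y₀, fun y => ?_⟩
  rcases le_or_gt (|y|) M with h | h
  · have : q y ≤ q y₀ := hy₀ (abs_le.mp h)
    have := abs_nonneg y
    linarith
  · have h1 := hlarge y h.le
    have : (1:ℝ) ≤ q y₀ := hq1 y₀
    linarith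

lemma aux_angle17 {α : ℝ} (hα0 : 0 < α) (hα2 : α < π/2) (z : ℂ)
    (hz : z ∈ ({z : ℂ | α < Complex.arg z ∧ Complex.arg z < π - α} ∪
        {z : ℂ | -π + α < Complex.arg z ∧ Complex.arg z < -α})) :
    ‖z‖ * Real.sin α ≤ |z.im| := by
  rcases eq_or_lt_of_le (norm_nonneg z) with h0 | h0
  · simp [← h0]
  have him : z.im = Real.sin (Complex.arg z) * ‖z‖ := by
    rw [Complex.sin_arg, div_mul_cancel₀]
    exact ne_of_gt h0
  rcases hz with ⟨h1, h2⟩ | ⟨h1, h2⟩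
  · have hs : Real.sin α ≤ Real.sin (Complex.arg z) := aux_sin17 hα0 hα2 h1.le h2.le
    calc ‖z‖ * Real.sin α ≤ Real.sin (Complex.arg z) * ‖z‖ := by
          rw [mul_comm]; exact mul_le_mul_of_nonneg_right hs (norm_nonneg z)
      _ = z.im := him.symm
      _ ≤ |z.im| := le_abs_self _
  · have hs : Real.sin α ≤ Real.sin (-Complex.arg z) := by
      apply aux_sin17 hα0 hα2 <;> linarith
    rw [Real.sin_neg] at hs
    calc ‖z‖ * Real.sin α ≤ (-Real.sin (Complex.arg z)) * ‖z‖ := by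
          rw [mul_comm]; exact mul_le_mul_of_nonneg_right hs (norm_nonneg z)
      _ = -z.im := by rw [him]; ring
      _ ≤ |z.im| := neg_le_abs _

/-- Lemma 2 of the paper. Let `μ` be a positive Borel measure on `ℂ` supported
in the closure of `D = {z : −q(Im z) < Re z < q(Im z)}` where `q ≥ 1` is
continuous with `limsup_{|y|→∞} q(y)/|y| < 1`; assume moreover that the support
of `μ` avoids the horizontal strip of half-width `b > 0` and lies in the pair of
vertical angles `{α < arg z < π − α} ∪ {−π + α < arg z < −α}`, and that
`m(y) := μ({|Im z| ≤ y}) ≤ C y`. Then there is `C₀ ≥ 0` with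
`∫_{r<|z|≤R, Re z>0} Re(1/z) dμ ≤ ∫_{(r,R]} (q(y)+q(−y))/y² dm(y) + C₀`
for all `b ≤ r < R`. -/
theorem stmt17 (μ : Measure ℂ)
    (q : ℝ → ℝ) (hqcont : Continuous q) (hq1 : ∀ y : ℝ, 1 ≤ q y)
    (hqlim : Filter.limsup (fun y : ℝ => ((q y / |y| : ℝ) : EReal))
        (Bornology.cobounded ℝ) < (1 : EReal))
    (hsupp : μ (closure {z : ℂ | -q z.im < z.re ∧ z.re < q z.im})ᶜ = 0)
    (b : ℝ) (hb : 0 < b) (hstrip : μ {z : ℂ | |z.im| < b} = 0)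
    (α : ℝ) (hα : α ∈ Set.Ioo 0 (π / 2))
    (hangles : μ ({z : ℂ | α < Complex.arg z ∧ Complex.arg z < π - α} ∪
        {z : ℂ | -π + α < Complex.arg z ∧ Complex.arg z < -α})ᶜ = 0)
    (C : ℝ) (hC : 0 ≤ C)
    (hm : ∀ y : ℝ, 0 ≤ y → μ {z : ℂ | |z.im| ≤ y} ≤ ENNReal.ofReal (C * y)) :
    ∃ C₀ : ℝ, 0 ≤ C₀ ∧ ∀ r R : ℝ, b ≤ r → r < R →
      (∫ z in {z : ℂ | r < ‖z‖ ∧ ‖z‖ ≤ R ∧ 0 < z.re},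
          ((1 : ℂ) / z).re ∂μ) ≤
        (∫ y in Set.Ioc r R, (q y + q (-y)) / y ^ 2
            ∂(Measure.map (fun z : ℂ => |z.im|) μ)) + C₀ := by
  obtain ⟨hα0, hα2⟩ := hα
  obtain ⟨A, hA1, hqA⟩ := aux_qlin17 q hqcont hq1 hqlim
  have hA0 : (0:ℝ) ≤ A := by linarith
  set s : ℝ := Real.sin α with hs_def
  have hs0 : 0 < s := Real.sin_pos_of_pos_of_lt_pi hα0 (by linarith [Real.pi_pos])
  have hs1 : s < 1 := by
    have := Real.strictMonoOn_sin (a := α) (b := π/2)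
      ⟨by linarith, by linarith⟩ ⟨by linarith [Real.pi_pos], le_refl _⟩ hα2
    rwa [Real.sin_pi_div_two] at this
  -- the function f
  set f : ℝ → ℝ := fun y => (q y + q (-y)) / y ^ 2 with hf_def
  have hf_meas : Measurable f :=
    ((hqcont.add (hqcont.comp continuous_neg)).measurable).div ((continuous_pow 2).measurable)
  have hf_nonneg : ∀ y, 0 ≤ f y := by
    intro y
    apply div_nonneg _ (sq_nonneg y)
    have := hq1 y; have := hq1 (-y); linarith
  have hf_bd : ∀ {a' R' : ℝ} (_ : 0 < a'), ∀ y ∈ Set.Ioc a' R', f y ≤ (2*A + 2*R') / a' ^ 2 := by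
    intro a' R' ha' y hy
    have hy0 : 0 < y := lt_trans ha' hy.1
    have hnum : q y + q (-y) ≤ 2*A + 2*R' := by
      have h1 := hqA y; have h2 := hqA (-y)
      rw [abs_of_pos hy0] at h1
      rw [abs_neg, abs_of_pos hy0] at h2
      have := hy.2; linarith
    have hnum0 : (0:ℝ) ≤ 2*A + 2*R' := by
      have := hq1 y; have := hq1 (-y); linarith
    exact div_le_div₀ hnum0 hnum (by positivity) (by nlinarith [hy.1.le])
  -- measurability of the map
  set φ : ℂ → ℝ := fun z => |z.im| with hφ_def
  have hφ : Measurable φ := (continuous_abs.comp Complex.continuous_im).measurable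
  -- a.e. facts
  have haeD : ∀ᵐ z ∂μ, z.re ≤ q z.im := by
    have h1 : ∀ᵐ z ∂μ, z ∈ closure {z : ℂ | -q z.im < z.re ∧ z.re < q z.im} :=
      ae_iff.mpr (by simpa [Set.compl_def] using hsupp)
    have hclos : closure {z : ℂ | -q z.im < z.re ∧ z.re < q z.im} ⊆ {z : ℂ | z.re ≤ q z.im} :=
      closure_minimal (fun z hz => le_of_lt hz.2)
        (isClosed_le Complex.continuous_re (hqcont.comp Complex.continuous_im))
    exact h1.mono fun z hz => hclos hz
  have haeb : ∀ᵐ z ∂μ, b ≤ |z.im| :=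
    ae_iff.mpr (by simpa [Set.compl_def, not_le] using hstrip)
  have haeang : ∀ᵐ z ∂μ, z ∈ ({z : ℂ | α < Complex.arg z ∧ Complex.arg z < π - α} ∪
      {z : ℂ | -π + α < Complex.arg z ∧ Complex.arg z < -α}) :=
    ae_iff.mpr (by simpa [Set.compl_def] using hangles)
  refine ⟨C * (2*A/b + 2) / s ^ 2, by positivity, ?_⟩
  intro r R hr hrR
  have hr0 : 0 < r := lt_of_lt_of_le hb hr
  have hR0 : 0 < R := lt_trans hr0 hrR
  set a : ℝ := r * s with ha_def
  have ha0 : 0 < a := mul_pos hr0 hs0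
  have har : a < r := by nlinarith
  set S : Set ℂ := {z : ℂ | r < ‖z‖ ∧ ‖z‖ ≤ R ∧ 0 < z.re} with hS_def
  set T : Set ℂ := φ ⁻¹' (Set.Ioc a R) with hT_def
  have hS : MeasurableSet S := by
    apply MeasurableSet.inter
    · exact measurableSet_lt measurable_const continuous_norm.measurable
    apply MeasurableSet.inter
    · exact measurableSet_le continuous_norm.measurable measurable_const
    · exact measurableSet_lt measurable_const Complex.measurable_re
  have hT : MeasurableSet T := hφ measurableSet_Ioc
  -- finiteness of measures
  have hfinR : μ {z : ℂ | |z.im| ≤ R} < ⊤ :=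
    lt_of_le_of_lt (hm R hR0.le) ENNReal.ofReal_lt_top
  have hSsub : S ⊆ {z : ℂ | |z.im| ≤ R} := fun z hz =>
    le_trans (Complex.abs_im_le_norm z) hz.2.1
  have hTsub : T ⊆ {z : ℂ | |z.im| ≤ R} := fun z hz => hz.2
  have hSfin : μ S < ⊤ := lt_of_le_of_lt (measure_mono hSsub) hfinR
  have hTfin : μ T < ⊤ := lt_of_le_of_lt (measure_mono hTsub) hfinR
  -- integrabilities over S and T
  have hfφ_meas : AEStronglyMeasurable (fun z => f (φ z)) μ :=
    ((hf_meas.comp hφ).aestronglyMeasurable)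
  have hint_S : IntegrableOn (fun z => f (φ z)) S μ := by
    apply Measure.integrableOn_of_bounded hSfin.ne hfφ_meas (M := (2*A + 2*R) / (b/2) ^ 2)
    filter_upwards [ae_restrict_of_ae haeb, ae_restrict_mem hS] with z hbz hzS
    rw [Real.norm_eq_abs, _root_.abs_of_nonneg (hf_nonneg _)]
    exact hf_bd (half_pos hb) (φ z) ⟨lt_of_lt_of_le (by linarith) hbz,
      le_trans (Complex.abs_im_le_norm z) hzS.2.1⟩
  have hint_T : IntegrableOn (fun z => f (φ z)) T μ := by
    apply Measure.integrableOn_of_bounded hTfin.ne hfφ_meas (M := (2*A + 2*R) / a ^ 2)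
    filter_upwards [ae_restrict_mem hT] with z hzT
    rw [Real.norm_eq_abs, _root_.abs_of_nonneg (hf_nonneg _)]
    exact hf_bd ha0 (φ z) hzT
  -- pointwise a.e. inequality on S
  have hpt : ∀ᵐ z ∂(μ.restrict S), ((1:ℂ)/z).re ≤ f (φ z) := by
    filter_upwards [ae_restrict_of_ae haeD, ae_restrict_of_ae haeb, ae_restrict_mem hS]
      with z hD hbz hzS
    have him : 0 < |z.im| := lt_of_lt_of_le hb hbz
    have himne : z.im ≠ 0 := by intro h; rw [h] at him; simp at him
    have hzne : z ≠ 0 := fun h => himne (by rw [h]; rfl)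
    have hnsq : 0 < Complex.normSq z := Complex.normSq_pos.mpr hzne
    have him2 : 0 < z.im ^ 2 := by positivity
    have hle1 : ((1:ℂ)/z).re ≤ z.re / z.im ^ 2 := by
      rw [one_div, Complex.inv_re]
      apply div_le_div_of_nonneg_left hzS.2.2.le him2
      rw [Complex.normSq_apply]; nlinarith [sq_nonneg z.re]
    have hle2 : z.re / z.im ^ 2 ≤ (q z.im + q (-z.im)) / z.im ^ 2 := by
      apply div_le_div_of_nonneg_right ?_ him2.le
      · have := hq1 (-z.im); linarith
    have hsum : q (φ z) + q (-(φ z)) = q z.im + q (-z.im) := by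
      show q |z.im| + q (-|z.im|) = _
      rcases abs_cases z.im with ⟨h, _⟩ | ⟨h, _⟩ <;> rw [h]
      rw [neg_neg, add_comm]
    have heq : f (φ z) = (q z.im + q (-z.im)) / z.im ^ 2 := by
      show (q (φ z) + q (-(φ z))) / (φ z) ^ 2 = _
      rw [hsum]
      congr 1
      exact sq_abs z.im
    rw [heq]
    exact le_trans hle1 hle2
  have hnn : ∀ᵐ z ∂(μ.restrict S), 0 ≤ ((1:ℂ)/z).re := by
    filter_upwards [ae_restrict_mem hS] with z hzS
    have hzne : z ≠ 0 := norm_ne_zero_iff.mp (ne_of_gt (lt_trans hr0 hzS.1))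
    rw [one_div, Complex.inv_re]
    exact div_nonneg hzS.2.2.le (Complex.normSq_nonneg z)
  -- S a.e. subset of T
  have hST : S ≤ᵐ[μ] T := by
    rw [ae_le_set]
    apply measure_mono_null _ hangles
    intro z hz
    simp only [Set.mem_diff] at hz
    intro hang
    apply hz.2
    have hkey := aux_angle17 hα0 hα2 z hang
    refine ⟨?_, le_trans (Complex.abs_im_le_norm z) hz.1.2.1⟩
    calc a = r * s := rfl
      _ < ‖z‖ * s := by
          exact mul_lt_mul_of_pos_right hz.1.1 hs0
      _ ≤ |z.im| := hkey
  -- change of variables & splitting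
  have hνIoc : ∀ u v : ℝ, Measure.map φ μ (Set.Ioc u v) = μ (φ ⁻¹' Set.Ioc u v) :=
    fun u v => Measure.map_apply hφ measurableSet_Ioc
  have hνfin : Measure.map φ μ (Set.Ioc a R) < ⊤ := by
    rw [hνIoc]
    exact lt_of_le_of_lt (measure_mono (fun z hz => hz.2)) hfinR
  have hint_ν : IntegrableOn f (Set.Ioc a R) (Measure.map φ μ) := by
    apply Measure.integrableOn_of_bounded hνfin.ne hf_meas.aestronglyMeasurable
      (M := (2*A + 2*R) / a ^ 2)
    filter_upwards [ae_restrict_mem measurableSet_Ioc] with y hy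
    rw [Real.norm_eq_abs, _root_.abs_of_nonneg (hf_nonneg _)]
    exact hf_bd ha0 y hy
  have hint_ν1 : IntegrableOn f (Set.Ioc a r) (Measure.map φ μ) :=
    hint_ν.mono_set (Set.Ioc_subset_Ioc_right hrR.le)
  have hint_ν2 : IntegrableOn f (Set.Ioc r R) (Measure.map φ μ) :=
    hint_ν.mono_set (Set.Ioc_subset_Ioc_left har.le)
  -- the small-interval bound
  have hbound1 : (∫ y in Set.Ioc a r, f y ∂(Measure.map φ μ)) ≤ C * (2*A/b + 2) / s ^ 2 := by
    have hν1fin : Measure.map φ μ (Set.Ioc a r) < ⊤ := by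
      rw [hνIoc]
      exact lt_of_le_of_lt (measure_mono (fun z hz => hz.2))
        (lt_of_le_of_lt (hm r hr0.le) ENNReal.ofReal_lt_top)
    have hM1 : ∀ᵐ y ∂((Measure.map φ μ).restrict (Set.Ioc a r)), ‖f y‖ ≤ (2*A + 2*r) / a ^ 2 := by
      filter_upwards [ae_restrict_mem measurableSet_Ioc] with y hy
      rw [Real.norm_eq_abs, _root_.abs_of_nonneg (hf_nonneg _)]
      exact hf_bd ha0 y hy
    have h1 := norm_setIntegral_le_of_norm_le_const_ae hν1fin hM1
    have h2 : (Measure.map φ μ (Set.Ioc a r)).toReal ≤ C * r := by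
      have hle : Measure.map φ μ (Set.Ioc a r) ≤ ENNReal.ofReal (C * r) := by
        rw [hνIoc]
        exact le_trans (measure_mono (fun z hz => hz.2)) (hm r hr0.le)
      calc (Measure.map φ μ (Set.Ioc a r)).toReal ≤ (ENNReal.ofReal (C * r)).toReal :=
            ENNReal.toReal_mono ENNReal.ofReal_ne_top hle
        _ = C * r := ENNReal.toReal_ofReal (by positivity)
    have hM1nn : (0:ℝ) ≤ (2*A + 2*r) / a ^ 2 := by positivity
    have h3 : (∫ y in Set.Ioc a r, f y ∂(Measure.map φ μ)) ≤ (2*A + 2*r) / a ^ 2 * (C * r) :=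
      le_trans (le_trans (le_abs_self _) h1)
        (mul_le_mul_of_nonneg_left h2 hM1nn)
    refine le_trans h3 ?_
    have heq : (2*A + 2*r) / a ^ 2 * (C * r) = C * (2*A/r + 2) / s ^ 2 := by
      rw [ha_def]
      field_simp
    rw [heq]
    gcongr
  -- assemble
  calc (∫ z in S, ((1:ℂ)/z).re ∂μ)
      ≤ ∫ z in S, f (φ z) ∂μ := integral_mono_of_nonneg hnn hint_S hpt
    _ ≤ ∫ z in T, f (φ z) ∂μ :=
        setIntegral_mono_set hint_T (Filter.Eventually.of_forall fun z => hf_nonneg _) hST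
    _ = ∫ y in Set.Ioc a R, f y ∂(Measure.map φ μ) :=
        (setIntegral_map measurableSet_Ioc hf_meas.aestronglyMeasurable hφ.aemeasurable).symm
    _ = (∫ y in Set.Ioc a r, f y ∂(Measure.map φ μ))
        + ∫ y in Set.Ioc r R, f y ∂(Measure.map φ μ) := by
        rw [← setIntegral_union (Set.Ioc_disjoint_Ioc_of_le le_rfl) measurableSet_Ioc hint_ν1 hint_ν2,
          Set.Ioc_union_Ioc_eq_Ioc har.le hrR.le]
    _ ≤ (∫ y in Set.Ioc r R, f y ∂(Measure.map φ μ)) + C * (2*A/b + 2) / s ^ 2 := by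
        rw [add_comm]
        exact add_le_add_right hbound1 _
end

section
/- Let m : [0, ∞) → [0, ∞) be increasing with m(t) = 0 on [0, b) for some b > 0 and m(t) ≤ C·t for all t. Let T : [b, ∞) → [0, ∞) be decreasing with T(t) ≤ C₃·t^{−N−1} for all t ≥ b, where N ≥ 0. Then for all b ≤ r < R: ∫_r^R T(t)·t^N dm(t) ≤ C·C₃ + C·C₃ + C·(N+1)·∫_r^R T(t)·t^N dt. -/
open Real Set MeasureTheory intervalIntegral

/-- Let `m` be increasing with `m = 0` on `[0, b)` and `m(t) ≤ C t`, and let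
`T` be decreasing on `[b, ∞)` with `0 ≤ T(t) ≤ C₃ t^{−N−1}` for `t ≥ b`,
`N ≥ 0`. Then for all `b ≤ r < R`,
`∫_{(r,R]} T(t) t^N dm(t) ≤ C C₃ + C C₃ + C (N+1) ∫_r^R T(t) t^N dt`. -/
theorem stmt19 (b : ℝ) (hb : 0 < b) (m : StieltjesFunction ℝ)
    (hm0 : ∀ t : ℝ, t < b → m t = 0) (hmpos : ∀ t : ℝ, 0 ≤ m t)
    (C : ℝ) (hC : 0 ≤ C) (hmC : ∀ t : ℝ, 0 ≤ t → m t ≤ C * t)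
    (N : ℝ) (hN : 0 ≤ N)
    (T : ℝ → ℝ) (hTanti : AntitoneOn T (Set.Ici b))
    (hTpos : ∀ t : ℝ, b ≤ t → 0 ≤ T t)
    (C₃ : ℝ) (hC₃ : 0 ≤ C₃)
    (hTC₃ : ∀ t : ℝ, b ≤ t → T t ≤ C₃ * t ^ (-N - 1)) :
    ∀ r R : ℝ, b ≤ r → r < R →
      (∫ t in Set.Ioc r R, T t * t ^ N ∂m.measure) ≤
        C * C₃ + C * C₃ + C * (N + 1) * ∫ t in r..R, T t * t ^ N := by
  intro r R hr hrR
  have hr0 : (0:ℝ) < r := hb.trans_le hr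
  have hR0 : (0:ℝ) < R := hr0.trans hrR
  have hbR : b ≤ R := hr.trans hrR.le
  have hN1 : (0:ℝ) ≤ N + 1 := by linarith
  -- globally antitone version of T
  set T' : ℝ → ℝ := fun t => T (max t b) with hT'def
  have hT'anti : Antitone T' := fun x y hxy =>
    hTanti (le_max_right x b) (le_max_right y b) (max_le_max hxy le_rfl)
  have hT'eq : ∀ t, b ≤ t → T' t = T t := fun t ht => by
    simp only [hT'def]; rw [max_eq_left ht]
  have hT'pos : ∀ t, 0 ≤ T' t := fun t => hTpos _ (le_max_right t b)
  have hT'C : ∀ t, b ≤ t → T' t ≤ C₃ * t ^ (-N - 1) := fun t ht => by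
    rw [hT'eq t ht]; exact hTC₃ t ht
  have hT'meas : Measurable T' := hT'anti.measurable
  have hpow : Measurable fun t : ℝ => t ^ N := by fun_prop
  have hfmeas : Measurable fun t : ℝ => T' t * t ^ N := hT'meas.mul hpow
  -- rewrite both integrals using T'
  rw [show (∫ t in Set.Ioc r R, T t * t ^ N ∂m.measure)
        = ∫ t in Set.Ioc r R, T' t * t ^ N ∂m.measure from
      setIntegral_congr_fun measurableSet_Ioc
        (fun t ht => by rw [hT'eq t (hr.trans ht.1.le)]),
    show (∫ t in r..R, T t * t ^ N) = ∫ t in r..R, T' t * t ^ N from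
      intervalIntegral.integral_congr (fun t ht => by
        rw [uIcc_of_le hrR.le] at ht
        rw [hT'eq t (hr.trans ht.1)])]
  set μ := m.measure with hμ
  set g : ℝ → ℝ := fun t => T' t - T' R with hgdef
  have hgmeas : Measurable g := hT'meas.sub measurable_const
  have hgnn : ∀ t, t ≤ R → 0 ≤ g t := fun t ht => sub_nonneg.2 (hT'anti ht)
  have hgle : ∀ t, g t ≤ T' t := fun t => sub_le_self _ (hT'pos R)
  set I : ℝ := ∫ t in r..R, T' t * t ^ N with hIdef
  have hInn : 0 ≤ I :=
    intervalIntegral.integral_nonneg hrR.le (fun u hu =>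
      mul_nonneg (hT'pos u) (rpow_nonneg (hr0.le.trans hu.1) N))
  have hRHS0 : 0 ≤ C * C₃ + C * C₃ + C * (N + 1) * I :=
    add_nonneg (add_nonneg (mul_nonneg hC hC₃) (mul_nonneg hC hC₃))
      (mul_nonneg (mul_nonneg hC hN1) hInn)
  have key : (∫⁻ t in Set.Ioc r R, ENNReal.ofReal (T' t * t ^ N) ∂μ)
      ≤ ENNReal.ofReal (C * C₃ + C * C₃ + C * (N + 1) * I) := by
    set Y : ℝ := max (g r) 0 with hYdef
    have hYle : Y ≤ T' r := max_le (hgle r) (hT'pos r)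
    -- the elementary layer function
    set F : ℝ → ℝ → ENNReal :=
      fun t y => if 0 < y ∧ y < g t then ENNReal.ofReal (t ^ N) else 0 with hFdef
    have hset1 : MeasurableSet {p : ℝ × ℝ | p.2 < g p.1} :=
      measurableSet_lt measurable_snd (hgmeas.comp measurable_fst)
    have hset0 : MeasurableSet {p : ℝ × ℝ | 0 < p.2 ∧ p.2 < g p.1} :=
      (measurableSet_lt measurable_const measurable_snd).inter hset1
    have hFmeas : Measurable (Function.uncurry F) := by
      have : Function.uncurry F = fun p : ℝ × ℝ =>
          if 0 < p.2 ∧ p.2 < g p.1 then ENNReal.ofReal (p.1 ^ N) else 0 := rfl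
      rw [this]
      exact Measurable.ite hset0 (by fun_prop) measurable_const
    -- layer cake identity
    have hlayer : ∀ t, 0 < t → t ≤ R →
        ENNReal.ofReal (g t * t ^ N) = ∫⁻ y, F t y ∂volume := by
      intro t ht htR
      have hind : ∀ y, F t y
          = Set.indicator (Set.Ioo 0 (g t)) (fun _ => ENNReal.ofReal (t ^ N)) y := by
        intro y; simp only [hFdef, Set.indicator_apply, Set.mem_Ioo]
      have e1 : (∫⁻ y, F t y ∂volume)
          = ENNReal.ofReal (t ^ N) * volume (Set.Ioo 0 (g t)) := by
        rw [lintegral_congr hind, lintegral_indicator measurableSet_Ioo, setLIntegral_const]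
      rw [e1, Real.volume_Ioo, sub_zero, ← ENNReal.ofReal_mul (rpow_nonneg ht.le N),
        mul_comm (t ^ N) (g t)]
    -- splitting
    have h1 : ∀ t ∈ Set.Ioc r R, ENNReal.ofReal (T' t * t ^ N)
        ≤ ENNReal.ofReal (T' R * t ^ N) + ENNReal.ofReal (g t * t ^ N) := by
      intro t ht
      rw [← ENNReal.ofReal_add (mul_nonneg (hT'pos R) (rpow_nonneg (hr0.trans ht.1).le N))
        (mul_nonneg (hgnn t ht.2) (rpow_nonneg (hr0.trans ht.1).le N))]
      exact ENNReal.ofReal_le_ofReal (le_of_eq (by simp only [hgdef]; ring))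
    have hsplit : (∫⁻ t in Set.Ioc r R, ENNReal.ofReal (T' t * t ^ N) ∂μ)
        ≤ (∫⁻ t in Set.Ioc r R, ENNReal.ofReal (T' R * t ^ N) ∂μ)
          + ∫⁻ t in Set.Ioc r R, ENNReal.ofReal (g t * t ^ N) ∂μ := by
      rw [← lintegral_add_left (by fun_prop)]
      exact setLIntegral_mono (by fun_prop) h1
    -- bound on the first piece
    have hA : (∫⁻ t in Set.Ioc r R, ENNReal.ofReal (T' R * t ^ N) ∂μ)
        ≤ ENNReal.ofReal (C * C₃) := by
      have hb1 : ∀ t ∈ Set.Ioc r R,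
          ENNReal.ofReal (T' R * t ^ N) ≤ ENNReal.ofReal (T' R * R ^ N) :=
        fun t ht => ENNReal.ofReal_le_ofReal
          (mul_le_mul_of_nonneg_left (rpow_le_rpow (hr0.trans ht.1).le ht.2 hN) (hT'pos R))
      calc (∫⁻ t in Set.Ioc r R, ENNReal.ofReal (T' R * t ^ N) ∂μ)
          ≤ ∫⁻ _ in Set.Ioc r R, ENNReal.ofReal (T' R * R ^ N) ∂μ :=
            setLIntegral_mono measurable_const hb1
        _ = ENNReal.ofReal (T' R * R ^ N) * μ (Set.Ioc r R) := setLIntegral_const _ _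
        _ ≤ ENNReal.ofReal (T' R * R ^ N) * ENNReal.ofReal (C * R) := by
            rw [hμ, m.measure_Ioc]
            exact mul_le_mul_right (ENNReal.ofReal_le_ofReal (by
              have h1 := hmpos r; have h2 := hmC R hR0.le; linarith)) _
        _ = ENNReal.ofReal (T' R * R ^ N * (C * R)) :=
            (ENNReal.ofReal_mul (mul_nonneg (hT'pos R) (rpow_nonneg hR0.le N))).symm
        _ ≤ ENNReal.ofReal (C * C₃) := ENNReal.ofReal_le_ofReal (by
            have hpow1 : R ^ (-N - 1) * R ^ N * R = 1 := by
              rw [← Real.rpow_add hR0, ← Real.rpow_add_one (ne_of_gt hR0)]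
              have h2 : -N - 1 + N + 1 = 0 := by ring
              rw [h2, Real.rpow_zero]
            calc T' R * R ^ N * (C * R)
                ≤ (C₃ * R ^ (-N - 1)) * R ^ N * (C * R) :=
                  mul_le_mul_of_nonneg_right
                    (mul_le_mul_of_nonneg_right (hT'C R hbR) (rpow_nonneg hR0.le N))
                    (mul_nonneg hC hR0.le)
              _ = C * C₃ * (R ^ (-N - 1) * R ^ N * R) := by ring
              _ = C * C₃ := by rw [hpow1, mul_one])
    -- bound on the second piece
    have hB : (∫⁻ t in Set.Ioc r R, ENNReal.ofReal (g t * t ^ N) ∂μ)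
        ≤ ENNReal.ofReal (C * C₃) + ENNReal.ofReal (C * (N + 1) * I) := by
      set G : ℝ → ℝ → ENNReal :=
        fun t y => if y < g t then ENNReal.ofReal (C * (N + 1) * (t ^ N)) else 0 with hGdef
      have hGmeas : Measurable (Function.uncurry G) := by
        have : Function.uncurry G = fun p : ℝ × ℝ =>
            if p.2 < g p.1 then ENNReal.ofReal (C * (N + 1) * (p.1 ^ N)) else 0 := rfl
        rw [this]
        exact Measurable.ite hset1 (by fun_prop) measurable_const
      -- Tonelli
      have e2 : (∫⁻ t in Set.Ioc r R, ENNReal.ofReal (g t * t ^ N) ∂μ)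
          = ∫⁻ y, ∫⁻ t in Set.Ioc r R, F t y ∂μ ∂volume := by
        rw [← lintegral_lintegral_swap hFmeas.aemeasurable]
        exact setLIntegral_congr_fun measurableSet_Ioc
          (fun t ht => hlayer t (hr0.trans ht.1) ht.2)
      -- restrict the y-integration to (0, Y)
      have hzero : ∀ y, y ∉ Set.Ioo (0:ℝ) Y → (∫⁻ t in Set.Ioc r R, F t y ∂μ) = 0 := by
        intro y hy
        have hz : ∀ t ∈ Set.Ioc r R, F t y = 0 := by
          intro t ht
          simp only [hFdef, ite_eq_right_iff]
          intro hcond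
          exfalso
          apply hy
          refine ⟨hcond.1, lt_of_lt_of_le hcond.2 (le_trans ?_ (le_max_left _ _))⟩
          exact sub_le_sub_right (hT'anti ht.1.le) _
        calc (∫⁻ t in Set.Ioc r R, F t y ∂μ) = ∫⁻ _ in Set.Ioc r R, 0 ∂μ :=
            setLIntegral_congr_fun measurableSet_Ioc hz
          _ = 0 := lintegral_zero
      have e3 : (∫⁻ y, ∫⁻ t in Set.Ioc r R, F t y ∂μ ∂volume)
          = ∫⁻ y in Set.Ioo 0 Y, ∫⁻ t in Set.Ioc r R, F t y ∂μ ∂volume := by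
        rw [← lintegral_add_compl (fun y => ∫⁻ t in Set.Ioc r R, F t y ∂μ)
          (measurableSet_Ioo (a := (0:ℝ)) (b := Y))]
        have hc0 : (∫⁻ y in (Set.Ioo (0:ℝ) Y)ᶜ, ∫⁻ t in Set.Ioc r R, F t y ∂μ ∂volume) = 0 := by
          calc (∫⁻ y in (Set.Ioo (0:ℝ) Y)ᶜ, ∫⁻ t in Set.Ioc r R, F t y ∂μ ∂volume)
              = ∫⁻ _ in (Set.Ioo (0:ℝ) Y)ᶜ, 0 ∂volume :=
                setLIntegral_congr_fun measurableSet_Ioo.compl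
                  (fun y hy => hzero y hy)
            _ = 0 := lintegral_zero
        rw [hc0, add_zero]
      -- pointwise bound on the inner integral
      have hinner : ∀ y ∈ Set.Ioo (0:ℝ) Y, (∫⁻ t in Set.Ioc r R, F t y ∂μ)
          ≤ ENNReal.ofReal (C * r ^ (N + 1)) + ∫⁻ t in Set.Ioo r R, G t y ∂volume := by
        intro y hy
        by_cases hS : {t | t ∈ Set.Ioc r R ∧ y < g t}.Nonempty
        · set S := {t | t ∈ Set.Ioc r R ∧ y < g t} with hSdef
          have hSbdd : BddAbove S := ⟨R, fun t ht => ht.1.2⟩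
          set c := sSup S with hcdef
          have hcR : c ≤ R := csSup_le hS (fun t ht => ht.1.2)
          have hrc : r < c := by
            obtain ⟨t, ht⟩ := hS
            exact lt_of_lt_of_le ht.1.1 (le_csSup hSbdd ht)
          have hc0 : 0 < c := hr0.trans hrc
          have hi : (∫⁻ t in Set.Ioc r R, F t y ∂μ) ≤ ENNReal.ofReal (C * c ^ (N + 1)) := by
            have hpt : ∀ t ∈ Set.Ioc r R, F t y
                ≤ Set.indicator (Set.Ioc r c) (fun _ => ENNReal.ofReal (c ^ N)) t := by
              intro t ht
              by_cases hcond : 0 < y ∧ y < g t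
              · have htc : t ≤ c := le_csSup hSbdd ⟨ht, hcond.2⟩
                have hmem : t ∈ Set.Ioc r c := ⟨ht.1, htc⟩
                rw [Set.indicator_of_mem hmem]
                simp only [hFdef, if_pos hcond]
                exact ENNReal.ofReal_le_ofReal (rpow_le_rpow (hr0.trans ht.1).le htc hN)
              · simp only [hFdef, if_neg hcond]; exact zero_le
            calc (∫⁻ t in Set.Ioc r R, F t y ∂μ)
                ≤ ∫⁻ t in Set.Ioc r R,
                    Set.indicator (Set.Ioc r c) (fun _ => ENNReal.ofReal (c ^ N)) t ∂μ :=
                  setLIntegral_mono (measurable_const.indicator measurableSet_Ioc) hpt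
              _ = ENNReal.ofReal (c ^ N) * (μ.restrict (Set.Ioc r R)) (Set.Ioc r c) := by
                  rw [lintegral_indicator measurableSet_Ioc, setLIntegral_const]
              _ ≤ ENNReal.ofReal (c ^ N) * μ (Set.Ioc r c) :=
                  mul_le_mul_right (Measure.restrict_apply_le _ _) _
              _ = ENNReal.ofReal (c ^ N) * ENNReal.ofReal (m c - m r) := by
                  rw [hμ, m.measure_Ioc]
              _ ≤ ENNReal.ofReal (c ^ N) * ENNReal.ofReal (C * c) :=
                  mul_le_mul_right (ENNReal.ofReal_le_ofReal (by
                    have h1 := hmpos r; have h2 := hmC c hc0.le; linarith)) _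
              _ = ENNReal.ofReal (c ^ N * (C * c)) :=
                  (ENNReal.ofReal_mul (rpow_nonneg hc0.le N)).symm
              _ = ENNReal.ofReal (C * c ^ (N + 1)) := by
                  rw [Real.rpow_add_one (ne_of_gt hc0)]; ring_nf
          have hii : ENNReal.ofReal (C * c ^ (N + 1))
              ≤ ENNReal.ofReal (C * r ^ (N + 1)) + ∫⁻ t in Set.Ioo r R, G t y ∂volume := by
            have hsub2 : ∀ t ∈ Set.Ioo r c, y < g t := by
              intro t ht
              obtain ⟨t', ht'S, htt'⟩ := exists_lt_of_lt_csSup hS ht.2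
              exact lt_of_lt_of_le ht'S.2 (sub_le_sub_right (hT'anti htt'.le) _)
            have hint : IntegrableOn (fun t => C * (N + 1) * (t ^ N)) (Set.Ioo r c) volume := by
              have h0 : IntervalIntegrable (fun t : ℝ => t ^ N) volume r c :=
                intervalIntegral.intervalIntegrable_rpow (Or.inl hN)
              have h1 : IntervalIntegrable (fun t : ℝ => C * (N + 1) * (t ^ N)) volume r c :=
                h0.const_mul _
              exact ((intervalIntegrable_iff_integrableOn_Ioc_of_le hrc.le).1 h1).mono_set
                Set.Ioo_subset_Ioc_self
            have e4 : (∫⁻ t in Set.Ioo r c, G t y ∂volume)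
                = ENNReal.ofReal (C * (c ^ (N + 1) - r ^ (N + 1))) := by
              have hGg : ∀ t ∈ Set.Ioo r c, G t y = ENNReal.ofReal (C * (N + 1) * (t ^ N)) :=
                fun t ht => by simp only [hGdef, if_pos (hsub2 t ht)]
              rw [setLIntegral_congr_fun measurableSet_Ioo hGg,
                ← ofReal_integral_eq_lintegral_ofReal hint (by
                  filter_upwards [ae_restrict_mem measurableSet_Ioo] with t ht
                  exact mul_nonneg (mul_nonneg hC hN1) (rpow_nonneg (hr0.trans ht.1).le N))]
              congr 1
              rw [MeasureTheory.integral_const_mul, ← integral_Ioc_eq_integral_Ioo,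
                ← intervalIntegral.integral_of_le hrc.le, integral_rpow (Or.inl (by linarith))]
              have hne : N + 1 ≠ 0 := by positivity
              field_simp
            calc ENNReal.ofReal (C * c ^ (N + 1))
                = ENNReal.ofReal (C * r ^ (N + 1))
                  + ENNReal.ofReal (C * (c ^ (N + 1) - r ^ (N + 1))) := by
                  rw [← ENNReal.ofReal_add (mul_nonneg hC (rpow_nonneg hr0.le _))
                    (mul_nonneg hC (sub_nonneg.2 (rpow_le_rpow hr0.le hrc.le hN1)))]
                  congr 1; ring
              _ ≤ ENNReal.ofReal (C * r ^ (N + 1)) + ∫⁻ t in Set.Ioo r R, G t y ∂volume := by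
                  apply add_le_add le_rfl
                  rw [← e4]
                  exact lintegral_mono_set (Set.Ioo_subset_Ioo_right hcR)
          exact hi.trans hii
        · have hz : ∀ t ∈ Set.Ioc r R, F t y = 0 := by
            intro t ht
            simp only [hFdef, ite_eq_right_iff]
            intro hcond
            exact absurd ⟨t, ht, hcond.2⟩ hS
          calc (∫⁻ t in Set.Ioc r R, F t y ∂μ) = ∫⁻ _ in Set.Ioc r R, 0 ∂μ :=
              setLIntegral_congr_fun measurableSet_Ioc hz
            _ = 0 := lintegral_zero
            _ ≤ _ := zero_le
      -- integrate the bound in y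
      have hsum : (∫⁻ y in Set.Ioo 0 Y, ∫⁻ t in Set.Ioc r R, F t y ∂μ ∂volume)
          ≤ ENNReal.ofReal (C * r ^ (N + 1)) * volume (Set.Ioo 0 Y)
            + ∫⁻ y in Set.Ioo 0 Y, ∫⁻ t in Set.Ioo r R, G t y ∂volume ∂volume := by
        calc (∫⁻ y in Set.Ioo 0 Y, ∫⁻ t in Set.Ioc r R, F t y ∂μ ∂volume)
            ≤ ∫⁻ y in Set.Ioo 0 Y, (ENNReal.ofReal (C * r ^ (N + 1))
                + ∫⁻ t in Set.Ioo r R, G t y ∂volume) ∂volume := by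
              apply lintegral_mono_ae
              filter_upwards [ae_restrict_mem measurableSet_Ioo] with y hy
              exact hinner y hy
          _ = _ := by
              rw [lintegral_add_left measurable_const, setLIntegral_const]
      -- the boundary term
      have hterm1 : ENNReal.ofReal (C * r ^ (N + 1)) * volume (Set.Ioo 0 Y)
          ≤ ENNReal.ofReal (C * C₃) := by
        rw [Real.volume_Ioo, sub_zero,
          ← ENNReal.ofReal_mul (mul_nonneg hC (rpow_nonneg hr0.le _))]
        apply ENNReal.ofReal_le_ofReal
        have h1 : r ^ (N + 1) * r ^ (-N - 1) = 1 := by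
          rw [← Real.rpow_add hr0]
          have h2 : N + 1 + (-N - 1) = 0 := by ring
          rw [h2, Real.rpow_zero]
        calc C * r ^ (N + 1) * Y ≤ C * r ^ (N + 1) * (C₃ * r ^ (-N - 1)) :=
              mul_le_mul_of_nonneg_left (hYle.trans (hT'C r hr))
                (mul_nonneg hC (rpow_nonneg hr0.le _))
          _ = C * C₃ * (r ^ (N + 1) * r ^ (-N - 1)) := by ring
          _ = C * C₃ := by rw [h1, mul_one]
      -- the main term: swap again
      have hterm2 : (∫⁻ y in Set.Ioo 0 Y, ∫⁻ t in Set.Ioo r R, G t y ∂volume ∂volume)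
          ≤ ENNReal.ofReal (C * (N + 1) * I) := by
        have hswap2 : (∫⁻ y in Set.Ioo 0 Y, ∫⁻ t in Set.Ioo r R, G t y ∂volume ∂volume)
            = ∫⁻ t in Set.Ioo r R, ∫⁻ y in Set.Ioo 0 Y, G t y ∂volume ∂volume :=
          lintegral_lintegral_swap ((hGmeas.comp measurable_swap).aemeasurable)
        rw [hswap2]
        have hint2 : IntegrableOn (fun t => C * (N + 1) * (T' t * t ^ N))
            (Set.Ioo r R) volume := by
          apply Measure.integrableOn_of_bounded (M := C * (N + 1) * (T' b * R ^ N))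
          · rw [Real.volume_Ioo]; exact ENNReal.ofReal_ne_top
          · exact ((measurable_const.mul (hT'meas.mul hpow))).aestronglyMeasurable
          · filter_upwards [ae_restrict_mem measurableSet_Ioo] with t ht
            have h0t : (0:ℝ) < t := hr0.trans ht.1
            have hfnn : 0 ≤ C * (N + 1) * (T' t * t ^ N) :=
              mul_nonneg (mul_nonneg hC hN1) (mul_nonneg (hT'pos t) (rpow_nonneg h0t.le N))
            rw [Real.norm_eq_abs, abs_of_nonneg hfnn]
            apply mul_le_mul_of_nonneg_left _ (mul_nonneg hC hN1)
            exact mul_le_mul (hT'anti (hr.trans ht.1.le)) (rpow_le_rpow h0t.le ht.2.le hN)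
              (rpow_nonneg h0t.le N) (hT'pos b)
        calc (∫⁻ t in Set.Ioo r R, ∫⁻ y in Set.Ioo 0 Y, G t y ∂volume ∂volume)
            ≤ ∫⁻ t in Set.Ioo r R, ENNReal.ofReal (C * (N + 1) * (T' t * t ^ N)) ∂volume := by
              apply lintegral_mono_ae
              filter_upwards [ae_restrict_mem measurableSet_Ioo] with t ht
              have h0t : (0:ℝ) < t := hr0.trans ht.1
              have hcnn : (0:ℝ) ≤ C * (N + 1) * (t ^ N) :=
                mul_nonneg (mul_nonneg hC hN1) (rpow_nonneg h0t.le N)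
              have hpt : ∀ y ∈ Set.Ioo (0:ℝ) Y, G t y
                  ≤ Set.indicator (Set.Ioo 0 (g t))
                      (fun _ => ENNReal.ofReal (C * (N + 1) * (t ^ N))) y := by
                intro y hy
                by_cases hcond : y < g t
                · have hmem : y ∈ Set.Ioo 0 (g t) := ⟨hy.1, hcond⟩
                  rw [Set.indicator_of_mem hmem]
                  simp only [hGdef, if_pos hcond]
                  exact le_rfl
                · simp only [hGdef, if_neg hcond]; exact zero_le
              calc (∫⁻ y in Set.Ioo 0 Y, G t y ∂volume)
                  ≤ ∫⁻ y in Set.Ioo 0 Y, Set.indicator (Set.Ioo 0 (g t))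
                      (fun _ => ENNReal.ofReal (C * (N + 1) * (t ^ N))) y ∂volume :=
                    setLIntegral_mono (measurable_const.indicator measurableSet_Ioo) hpt
                _ ≤ ∫⁻ y, Set.indicator (Set.Ioo 0 (g t))
                      (fun _ => ENNReal.ofReal (C * (N + 1) * (t ^ N))) y ∂volume :=
                    setLIntegral_le_lintegral _ _
                _ = ENNReal.ofReal (C * (N + 1) * (t ^ N)) * volume (Set.Ioo 0 (g t)) := by
                    rw [lintegral_indicator measurableSet_Ioo, setLIntegral_const]
                _ ≤ ENNReal.ofReal (C * (N + 1) * (T' t * t ^ N)) := by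
                    rw [Real.volume_Ioo, sub_zero, ← ENNReal.ofReal_mul hcnn]
                    apply ENNReal.ofReal_le_ofReal
                    calc C * (N + 1) * (t ^ N) * g t ≤ C * (N + 1) * (t ^ N) * T' t :=
                          mul_le_mul_of_nonneg_left (hgle t) hcnn
                      _ = C * (N + 1) * (T' t * t ^ N) := by ring
          _ = ENNReal.ofReal (∫ t in Set.Ioo r R, C * (N + 1) * (T' t * t ^ N) ∂volume) :=
              (ofReal_integral_eq_lintegral_ofReal hint2 (by
                filter_upwards [ae_restrict_mem measurableSet_Ioo] with t ht
                exact mul_nonneg (mul_nonneg hC hN1)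
                  (mul_nonneg (hT'pos t) (rpow_nonneg (hr0.trans ht.1).le N)))).symm
          _ = ENNReal.ofReal (C * (N + 1) * I) := by
              rw [MeasureTheory.integral_const_mul, hIdef,
                intervalIntegral.integral_of_le hrR.le, integral_Ioc_eq_integral_Ioo]
      calc (∫⁻ t in Set.Ioc r R, ENNReal.ofReal (g t * t ^ N) ∂μ)
          = ∫⁻ y in Set.Ioo 0 Y, ∫⁻ t in Set.Ioc r R, F t y ∂μ ∂volume := by rw [e2, e3]
        _ ≤ _ := hsum
        _ ≤ ENNReal.ofReal (C * C₃) + ENNReal.ofReal (C * (N + 1) * I) :=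
            add_le_add hterm1 hterm2
    calc (∫⁻ t in Set.Ioc r R, ENNReal.ofReal (T' t * t ^ N) ∂μ)
        ≤ (∫⁻ t in Set.Ioc r R, ENNReal.ofReal (T' R * t ^ N) ∂μ)
          + ∫⁻ t in Set.Ioc r R, ENNReal.ofReal (g t * t ^ N) ∂μ := hsplit
      _ ≤ ENNReal.ofReal (C * C₃)
          + (ENNReal.ofReal (C * C₃) + ENNReal.ofReal (C * (N + 1) * I)) := add_le_add hA hB
      _ = ENNReal.ofReal (C * C₃) + ENNReal.ofReal (C * C₃)
          + ENNReal.ofReal (C * (N + 1) * I) := (add_assoc _ _ _).symm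
      _ = ENNReal.ofReal (C * C₃ + C * C₃ + C * (N + 1) * I) := by
          rw [← ENNReal.ofReal_add (mul_nonneg hC hC₃) (mul_nonneg hC hC₃),
            ← ENNReal.ofReal_add (add_nonneg (mul_nonneg hC hC₃) (mul_nonneg hC hC₃))
              (mul_nonneg (mul_nonneg hC hN1) hInn)]
  rw [integral_eq_lintegral_of_nonneg_ae (by
      filter_upwards [ae_restrict_mem measurableSet_Ioc] with t ht
      exact mul_nonneg (hT'pos t) (rpow_nonneg (hr0.trans ht.1).le N))
    hfmeas.aestronglyMeasurable]
  exact ENNReal.toReal_le_of_le_ofReal hRHS0 key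
end
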